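/- Let Z : [0,t] → ℝ be càdlàg of bounded variation, Y : [0,t] → ℝ bounded measurable, and g ∈ W^{1,2}([0,t]). Define the pathwise stochastic integral via integration by parts: ∫₀^{s} g(s-u) dZ(u) := g(0)Z(s) - g(s)Z(0) + ∫₀^s Z(u) g'(s-u) du. Then the Fubini-type identity ∫₀^t Y(s) (∫₀^{s} g(s-u) dZ(u)) ds = ∫₀^t (∫_u^t Y(s) g(s-u) ds) dZ(u) holds, where the outer integral on the right is again defined via integration by parts with the function G(u) = ∫_u^t Y(s) g(s-u) ds. -/

import Mathlib

open MeasureTheory intervalIntegral Set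

/-!
Unfolding the integration-by-parts integrals and using `G t = 0`, `G 0 = ∫₀ᵗ Y g` and the formula
for `G'`, the boundary terms on both sides agree, and the identity reduces to
`∫₀ᵗ Y(s) ∫₀ˢ Z(u) g'(s-u) du ds = ∫₀ᵗ Z(u) ∫ᵤᵗ Y(s) g'(s-u) ds du`.
This is Fubini on the triangle `0 ≤ u ≤ s ≤ t`: once `Y`, `Z`, `g'` are cut off to `(0, t]`,
the integrand `Y(s) Z(u) g'(s-u)` is a bounded function times the convolution integrand of two
`L¹` functions, hence integrable on `ℝ × ℝ`.
-/

section ConvolutionFubini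

variable {G : Type*} [MeasurableSpace G] [AddGroup G] [MeasurableAdd₂ G] [MeasurableNeg G]
  {μ : Measure G} [SFinite μ] [μ.IsAddRightInvariant] {Y Z k : G → ℝ} {C : ℝ}

theorem integrable_mul_convolution_integrand (hY : AEStronglyMeasurable Y μ)
    (hYC : ∀ s, ‖Y s‖ ≤ C) (hZ : Integrable Z μ) (hk : Integrable k μ) :
    Integrable (fun p : G × G => Y p.1 * (Z p.2 * k (p.1 - p.2))) (μ.prod μ) :=
  (hZ.convolution_integrand (ContinuousLinearMap.mul ℝ ℝ) hk).bdd_mul hY.comp_fst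
    (Filter.Eventually.of_forall fun p => hYC p.1)

theorem integrable_mul_integral_mul_sub (hY : AEStronglyMeasurable Y μ)
    (hYC : ∀ s, ‖Y s‖ ≤ C) (hZ : Integrable Z μ) (hk : Integrable k μ) :
    Integrable (fun s => Y s * ∫ u, Z u * k (s - u) ∂μ) μ := by
  simpa only [MeasureTheory.integral_const_mul] using
    (integrable_mul_convolution_integrand hY hYC hZ hk).integral_prod_left

theorem integrable_mul_integral_mul_sub' (hY : AEStronglyMeasurable Y μ)
    (hYC : ∀ s, ‖Y s‖ ≤ C) (hZ : Integrable Z μ) (hk : Integrable k μ) :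
    Integrable (fun u => Z u * ∫ s, Y s * k (s - u) ∂μ) μ := by
  simpa only [mul_left_comm (Y _), MeasureTheory.integral_const_mul] using
    (integrable_mul_convolution_integrand hY hYC hZ hk).integral_prod_right

theorem integral_mul_integral_mul_sub_comm (hY : AEStronglyMeasurable Y μ)
    (hYC : ∀ s, ‖Y s‖ ≤ C) (hZ : Integrable Z μ) (hk : Integrable k μ) :
    ∫ s, Y s * ∫ u, Z u * k (s - u) ∂μ ∂μ = ∫ u, Z u * ∫ s, Y s * k (s - u) ∂μ ∂μ := by
  calc ∫ s, Y s * ∫ u, Z u * k (s - u) ∂μ ∂μ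
      = ∫ s, ∫ u, Y s * (Z u * k (s - u)) ∂μ ∂μ := by
        simp only [MeasureTheory.integral_const_mul]
    _ = ∫ u, ∫ s, Y s * (Z u * k (s - u)) ∂μ ∂μ :=
        integral_integral_swap (integrable_mul_convolution_integrand hY hYC hZ hk)
    _ = ∫ u, Z u * ∫ s, Y s * k (s - u) ∂μ ∂μ := by
        simp only [mul_left_comm (Y _), MeasureTheory.integral_const_mul]

end ConvolutionFubini

theorem integrableOn_Ioc_of_abs_le {f : ℝ → ℝ} {a b C : ℝ}
    (hf : AEStronglyMeasurable f (volume.restrict (Ioc a b)))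
    (hC : ∀ x ∈ Ioc a b, |f x| ≤ C) : IntegrableOn f (Ioc a b) :=
  .of_bound measure_Ioc_lt_top hf C
    ((ae_restrict_iff' measurableSet_Ioc).2 (Filter.Eventually.of_forall hC))

section Triangle

variable {t : ℝ} {Y Z k : ℝ → ℝ}

theorem indicator_mul_integral_indicator_mul_sub (s : ℝ) :
    (Ioc 0 t).indicator Y s * ∫ u, (Ioc 0 t).indicator Z u * (Ioc 0 t).indicator k (s - u)
      = (Ioc 0 t).indicator (fun s => Y s * ∫ u in 0..s, Z u * k (s - u)) s := by
  by_cases hs : s ∈ Ioc 0 t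
  · have h : (fun u => (Ioc 0 t).indicator Z u * (Ioc 0 t).indicator k (s - u))
        = (Ioo 0 s).indicator fun u => Z u * k (s - u) := by
      ext u
      simp only [indicator_apply, mem_Ioc, mem_Ioo] at hs ⊢
      split_ifs <;> grind
    rw [indicator_of_mem hs, indicator_of_mem hs, h, MeasureTheory.integral_indicator
      measurableSet_Ioo, ← integral_Ioc_eq_integral_Ioo, integral_of_le hs.1.le]
  · simp only [indicator_of_notMem hs, zero_mul]

theorem indicator_mul_integral_indicator_mul_sub' (u : ℝ) :
    (Ioc 0 t).indicator Z u * ∫ s, (Ioc 0 t).indicator Y s * (Ioc 0 t).indicator k (s - u)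
      = (Ioc 0 t).indicator (fun u => Z u * ∫ s in u..t, Y s * k (s - u)) u := by
  by_cases hu : u ∈ Ioc 0 t
  · have h : (fun s => (Ioc 0 t).indicator Y s * (Ioc 0 t).indicator k (s - u))
        = (Ioc u t).indicator fun s => Y s * k (s - u) := by
      ext s
      simp only [indicator_apply, mem_Ioc] at hu ⊢
      split_ifs <;> grind
    rw [indicator_of_mem hu, indicator_of_mem hu, h, MeasureTheory.integral_indicator
      measurableSet_Ioc, integral_of_le hu.2]
  · simp only [indicator_of_notMem hu, zero_mul]

theorem intervalIntegral_mul_intervalIntegral_mul_sub_swap {C : ℝ} (ht : 0 ≤ t)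
    (hY : AEStronglyMeasurable Y (volume.restrict (Ioc 0 t))) (hYC : ∀ s ∈ Ioc 0 t, |Y s| ≤ C)
    (hZ : IntegrableOn Z (Ioc 0 t)) (hk : IntegrableOn k (Ioc 0 t)) :
    IntervalIntegrable (fun s => Y s * ∫ u in 0..s, Z u * k (s - u)) volume 0 t ∧
    IntervalIntegrable (fun u => Z u * ∫ s in u..t, Y s * k (s - u)) volume 0 t ∧
    ∫ s in 0..t, Y s * ∫ u in 0..s, Z u * k (s - u)
      = ∫ u in 0..t, Z u * ∫ s in u..t, Y s * k (s - u) := by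
  have hY' : AEStronglyMeasurable ((Ioc 0 t).indicator Y) volume :=
    (aestronglyMeasurable_indicator_iff measurableSet_Ioc).2 hY
  have hYC' : ∀ s, ‖(Ioc 0 t).indicator Y s‖ ≤ max C 0 := fun s => by
    by_cases hs : s ∈ Ioc 0 t
    · rw [indicator_of_mem hs, Real.norm_eq_abs]
      exact (hYC s hs).trans (le_max_left C 0)
    · rw [indicator_of_notMem hs, norm_zero]
      exact le_max_right C 0
  have hZ' := hZ.integrable_indicator measurableSet_Ioc
  have hk' := hk.integrable_indicator measurableSet_Ioc
  have hL := integrable_mul_integral_mul_sub hY' hYC' hZ' hk'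
  have hR := integrable_mul_integral_mul_sub' hY' hYC' hZ' hk'
  have hLR := integral_mul_integral_mul_sub_comm hY' hYC' hZ' hk'
  simp only [indicator_mul_integral_indicator_mul_sub,
    indicator_mul_integral_indicator_mul_sub'] at hL hR hLR
  rw [integrable_indicator_iff measurableSet_Ioc] at hL hR
  rw [MeasureTheory.integral_indicator measurableSet_Ioc,
    MeasureTheory.integral_indicator measurableSet_Ioc] at hLR
  rw [intervalIntegrable_iff_integrableOn_Ioc_of_le ht,
    intervalIntegrable_iff_integrableOn_Ioc_of_le ht, integral_of_le ht, integral_of_le ht]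
  exact ⟨hL, hR, hLR⟩

end Triangle

theorem stmt4_general (t : ℝ) (ht : 0 < t)
    (Z : ℝ → ℝ) (hZmeas : Measurable Z) (CZ : ℝ) (hZbdd : ∀ u ∈ Set.Icc (0:ℝ) t, |Z u| ≤ CZ)
    (Y : ℝ → ℝ) (hYmeas : Measurable Y) (CY : ℝ) (hYbdd : ∀ s ∈ Set.Icc (0:ℝ) t, |Y s| ≤ CY)
    (g g' : ℝ → ℝ)
    (hAC : ∀ x ∈ Set.Icc 0 t, g x = g 0 + ∫ u in (0:ℝ)..x, g' u)
    (hg'int : IntervalIntegrable g' volume 0 t)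
    -- G(u) = ∫ᵤᵗ Y(s) g(s-u) ds and its weak derivative G'
    (G G' : ℝ → ℝ)
    (hG : ∀ u ∈ Set.Icc (0:ℝ) t, G u = ∫ s in u..t, Y s * g (s - u))
    (hG' : ∀ u ∈ Set.Icc (0:ℝ) t, G' u = -(∫ s in u..t, Y s * g' (s - u)) - Y u * g 0) :
    (∫ s in (0:ℝ)..t, Y s * (g 0 * Z s - g s * Z 0 + ∫ u in (0:ℝ)..s, Z u * g' (s - u)))
      = G t * Z t - G 0 * Z 0 - ∫ u in (0:ℝ)..t, Z u * G' u := by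
  have hIcc : uIcc 0 t = Icc 0 t := uIcc_of_le ht.le
  have hYC : ∀ s ∈ Ioc 0 t, |Y s| ≤ CY := fun s hs => hYbdd s (Ioc_subset_Icc_self hs)
  have hY := integrableOn_Ioc_of_abs_le hYmeas.aestronglyMeasurable.restrict hYC
  have hZ := integrableOn_Ioc_of_abs_le hZmeas.aestronglyMeasurable.restrict
    fun u hu => hZbdd u (Ioc_subset_Icc_self hu)
  obtain ⟨hYI, hZJ, hswap⟩ := intervalIntegral_mul_intervalIntegral_mul_sub_swap ht.le
    hYmeas.aestronglyMeasurable.restrict hYC hZ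
    ((intervalIntegrable_iff_integrableOn_Ioc_of_le ht.le).1 hg'int)
  have hYZ : IntervalIntegrable (fun s => Y s * Z s) volume 0 t :=
    (intervalIntegrable_iff_integrableOn_Ioc_of_le ht.le).2 <|
      hZ.bdd_mul hYmeas.aestronglyMeasurable.restrict
        ((ae_restrict_iff' measurableSet_Ioc).2 (Filter.Eventually.of_forall hYC))
  have hg : ContinuousOn g (uIcc 0 t) :=
    (continuousOn_const.add (continuousOn_primitive_interval' hg'int left_mem_uIcc)).congr
      fun x hx => hAC x (hIcc ▸ hx)
  have hYg : IntervalIntegrable (fun s => Y s * g s) volume 0 t :=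
    ((intervalIntegrable_iff_integrableOn_Ioc_of_le ht.le).2 hY).mul_continuousOn hg
  have hGt : G t = 0 := by rw [hG t ⟨ht.le, le_rfl⟩, integral_same]
  have hG0 : G 0 = ∫ s in 0..t, Y s * g s := by simp only [hG 0 ⟨le_rfl, ht.le⟩, sub_zero]
  have hLHS : (∫ s in 0..t, Y s * (g 0 * Z s - g s * Z 0 + ∫ u in 0..s, Z u * g' (s - u)))
      = g 0 * (∫ s in 0..t, Y s * Z s) - Z 0 * (∫ s in 0..t, Y s * g s)
        + ∫ s in 0..t, Y s * ∫ u in 0..s, Z u * g' (s - u) := by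
    simp only [mul_add, mul_sub, mul_left_comm (Y _), mul_comm (g _) (Z 0)]
    rw [integral_add ((hYZ.const_mul _).sub (hYg.const_mul _)) hYI,
      integral_sub (hYZ.const_mul _) (hYg.const_mul _), intervalIntegral.integral_const_mul,
      intervalIntegral.integral_const_mul]
  have hRHS : ∫ u in 0..t, Z u * G' u
      = -(∫ u in 0..t, Z u * ∫ s in u..t, Y s * g' (s - u)) - g 0 * ∫ s in 0..t, Y s * Z s := by
    calc ∫ u in 0..t, Z u * G' u
        = ∫ u in 0..t, (-(Z u * ∫ s in u..t, Y s * g' (s - u)) - g 0 * (Y u * Z u)) :=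
          integral_congr fun u hu => by rw [hG' u (hIcc ▸ hu)]; ring
      _ = _ := by
          rw [integral_sub (f := fun u => -(Z u * ∫ s in u..t, Y s * g' (s - u))) hZJ.neg
            (hYZ.const_mul _), intervalIntegral.integral_neg,
            intervalIntegral.integral_const_mul]
  rw [hLHS, hRHS, hGt, hG0, hswap]
  ring

/-- Fubini-type identity for the pathwise (integration-by-parts) stochastic
integral: ∫₀ᵗ Y(s) (∫₀ˢ g(s-u) dZ(u)) ds = ∫₀ᵗ (∫ᵤᵗ Y(s) g(s-u) ds) dZ(u). -/
theorem stmt4 (t : ℝ) (ht : 0 < t)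
    (Z : ℝ → ℝ) (hZmeas : Measurable Z) (CZ : ℝ) (hZbdd : ∀ u ∈ Set.Icc (0:ℝ) t, |Z u| ≤ CZ)
    (Y : ℝ → ℝ) (hYmeas : Measurable Y) (CY : ℝ) (hYbdd : ∀ s ∈ Set.Icc (0:ℝ) t, |Y s| ≤ CY)
    (g g' : ℝ → ℝ)
    (hAC : ∀ x ∈ Set.Icc 0 t, g x = g 0 + ∫ u in (0:ℝ)..x, g' u)
    (hg'int : IntervalIntegrable g' volume 0 t)
    (hg'int2 : IntervalIntegrable (fun u => (g' u) ^ 2) volume 0 t)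
    -- G(u) = ∫ᵤᵗ Y(s) g(s-u) ds and its weak derivative G'
    (G G' : ℝ → ℝ)
    (hG : ∀ u ∈ Set.Icc (0:ℝ) t, G u = ∫ s in u..t, Y s * g (s - u))
    (hG' : ∀ u ∈ Set.Icc (0:ℝ) t, G' u = -(∫ s in u..t, Y s * g' (s - u)) - Y u * g 0)
    (hG'int : IntervalIntegrable G' volume 0 t) :
    (∫ s in (0:ℝ)..t, Y s * (g 0 * Z s - g s * Z 0 + ∫ u in (0:ℝ)..s, Z u * g' (s - u)))
      = G t * Z t - G 0 * Z 0 - ∫ u in (0:ℝ)..t, Z u * G' u :=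
  stmt4_general t ht Z hZmeas CZ hZbdd Y hYmeas CY hYbdd g g' hAC hg'int G G' hG hG'
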